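/- Let ρ : T → (0,∞) be a C^1 function on the one-dimensional torus with ∫_T ρ dx = 1, and let α > 1/2. Then for every x ∈ T, ρ(x)^α ≤ 1 + (α/(α−1/2)) ∫_T ρ^{1/2} |∂_x(ρ^{α−1/2})| dx. -/

import Mathlib

/-!
The minimum of `ρ` over a period is at most its mean, which is `1`, so `ρ^α ≤ 1` somewhere in
`[x - 1, x]`; from there `ρ^α` can grow by at most the total variation `∫ |∂ₓ(ρ^α)|` over a
period. The chain rule gives `∂ₓ(ρ^α) = (α/(α-1/2)) ρ^{1/2} ∂ₓ(ρ^{α-1/2})`, which turns this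
variation into the right-hand side.
-/

open MeasureTheory Set

theorem Function.Periodic.deriv {E : Type*} [NormedAddCommGroup E] [NormedSpace ℝ E]
    {f : ℝ → E} {c : ℝ} (hf : Function.Periodic f c) : Function.Periodic (deriv f) c :=
  fun x => by rw [← deriv_comp_add_const, hf.funext]

theorem Function.Periodic.intervalIntegral_sub_eq {E : Type*} [NormedAddCommGroup E]
    [NormedSpace ℝ E] {f : ℝ → E} {T : ℝ} (hf : Function.Periodic f T) (x : ℝ) :
    ∫ t in (x - T)..x, f t = ∫ t in (0 : ℝ)..T, f t := by
  simpa using hf.intervalIntegral_add_eq (x - T) 0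

theorem ContinuousOn.exists_mem_Icc_mul_le_integral {f : ℝ → ℝ} {a b : ℝ} (hab : a ≤ b)
    (hf : ContinuousOn f (Icc a b)) : ∃ y ∈ Icc a b, (b - a) * f y ≤ ∫ t in a..b, f t := by
  obtain ⟨y, hy, hmin⟩ := isCompact_Icc.exists_isMinOn (nonempty_Icc.2 hab) hf
  refine ⟨y, hy, ?_⟩
  calc (b - a) * f y = ∫ _ in a..b, f y := by simp
    _ ≤ ∫ t in a..b, f t :=
      intervalIntegral.integral_mono_on hab intervalIntegrable_const
        (hf.intervalIntegrable_of_Icc hab) fun t ht => hmin ht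

theorem deriv_rpow_const_eq_mul_deriv_rpow_const {f : ℝ → ℝ} {x : ℝ} (p : ℝ) {q : ℝ}
    (hf : DifferentiableAt ℝ f x) (hx : 0 < f x) (hq : q ≠ 0) :
    deriv (fun z => f z ^ p) x = p / q * f x ^ (p - q) * deriv (fun z => f z ^ q) x := by
  rw [(hf.hasDerivAt.rpow_const (p := p) (Or.inl hx.ne')).deriv,
    (hf.hasDerivAt.rpow_const (p := q) (Or.inl hx.ne')).deriv, Real.rpow_sub_one hx.ne',
    Real.rpow_sub_one hx.ne', Real.rpow_sub hx]
  field_simp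

theorem ContDiff.sub_le_integral_abs_deriv {f : ℝ → ℝ} (hf : ContDiff ℝ 1 f) {a y x : ℝ}
    (hay : a ≤ y) (hyx : y ≤ x) : f x - f y ≤ ∫ t in a..x, |deriv f t| := by
  have hdf : Continuous fun t => |deriv f t| := (hf.continuous_deriv le_rfl).abs
  calc f x - f y ≤ ∫ t in y..x, |deriv f t| :=
        (le_abs_self _).trans <| norm_sub_le_integral_of_norm_deriv_le_of_le hyx
          hf.continuous.continuousOn (hf.differentiable one_ne_zero).differentiableOn
          (.of_forall fun _ _ => le_rfl) (hdf.intervalIntegrable _ _)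
    _ ≤ ∫ t in a..x, |deriv f t| :=
        intervalIntegral.integral_mono_interval hay hyx le_rfl
          (.of_forall fun _ => abs_nonneg _) (hdf.intervalIntegrable _ _)

/-- For a positive `C¹` function `ρ` on the unit torus with unit mass and `α > 1/2`,
`ρ(x)^α ≤ 1 + (α/(α−1/2)) ∫ ρ^{1/2} |∂ₓ(ρ^{α−1/2})|` for every `x`. -/
theorem rpow_alpha_bound (ρ : ℝ → ℝ) (α : ℝ) (hα : 1/2 < α)
    (hper : Function.Periodic ρ 1) (hpos : ∀ x, 0 < ρ x)
    (hC1 : ContDiff ℝ 1 ρ) (hmass : (∫ x in (0:ℝ)..1, ρ x) = 1)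
    (x : ℝ) :
    ρ x ^ α ≤ 1 + (α / (α - 1/2)) *
      ∫ y in (0:ℝ)..1, ρ y ^ ((1:ℝ)/2) * |deriv (fun z => ρ z ^ (α - 1/2)) y| := by
  set g : ℝ → ℝ := fun z => ρ z ^ α
  have hg : ContDiff ℝ 1 g := hC1.rpow_const_of_ne fun z => (hpos z).ne'
  obtain ⟨y, ⟨hy_left, hy_right⟩, hy⟩ :=
    (hC1.continuous.continuousOn (s := Icc (x - 1) x)).exists_mem_Icc_mul_le_integral
      (by linarith)
  have hgy : g y ≤ 1 := by
    rw [sub_sub_cancel, one_mul, hper.intervalIntegral_sub_eq, hmass] at hy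
    exact Real.rpow_le_one (hpos y).le hy (by linarith)
  have hvariation : g x - g y ≤ ∫ t in (x - 1)..x, |deriv g t| :=
    hg.sub_le_integral_abs_deriv hy_left hy_right
  have hchain : ∀ t, |deriv g t| =
      α / (α - 1/2) * (ρ t ^ ((1:ℝ)/2) * |deriv (fun z => ρ z ^ (α - 1/2)) t|) := fun t => by
    rw [deriv_rpow_const_eq_mul_deriv_rpow_const α (q := α - 1/2)
      (hC1.differentiable one_ne_zero t) (hpos t) (by linarith), abs_mul, abs_mul,
      abs_of_pos (by positivity), abs_of_pos (Real.rpow_pos_of_pos (hpos t) _)]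
    ring_nf
  calc ρ x ^ α = g y + (g x - g y) := by ring
    _ ≤ 1 + ∫ t in (0:ℝ)..1, |deriv g t| := by
      have hdg_per : Function.Periodic (fun t => |deriv g t|) 1 :=
        (hper.comp (· ^ α)).deriv.comp abs
      rw [← hdg_per.intervalIntegral_sub_eq x]
      linarith
    _ = _ := by simp only [hchain, intervalIntegral.integral_const_mul]
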